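/- Let f be a nonnegative trigonometric polynomial, g ≥ 2 an integer, and let p be a trigonometric polynomial satisfying the TGM condition (i) at every zero of f and the TGM condition (ii) globally. Let f̂(x) = (1/g) Σ_{y ∈ Ω_g(x/g)} f(y)|p(y)|². If x₀ ∈ [0,2π) is a zero of f of finite order 2β (i.e., 2β is the smallest even integer such that lim_{x→x₀} |x−x₀|^{2β}/f(x) < ∞ and the limit of f(x)/|x−x₀|^{2β} is positive), then y₀ = g·x₀ (mod 2π) is a zero of f̂ of exactly the same order 2β. -/
import Mathlib

open Complex Filter Topology

noncomputable section

/-- A real-valued function is a trigonometric polynomial: a finite sum `∑_{|j|≤c} a_j e^{ijx}`. -/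
def IsTrigPolyR (f : ℝ → ℝ) : Prop :=
  ∃ (c : ℕ) (a : ℤ → ℂ), ∀ x : ℝ,
    (f x : ℂ) = ∑ j ∈ Finset.Icc (-(c : ℤ)) (c : ℤ), a j * Complex.exp (Complex.I * (j : ℂ) * (x : ℂ))

/-- TGM condition (i): for every zero `x₀` of `f` (in `[0,2π)`), for each `k = 1,…,g−1`,
`lim_{x→x₀} p(x + 2πk/g)² / f(x)` exists finite. -/
def TGMCondOne (f p : ℝ → ℝ) (g : ℕ) : Prop :=
  ∀ x₀ ∈ Set.Ico (0 : ℝ) (2 * Real.pi), f x₀ = 0 →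
    ∀ j : ℕ, 1 ≤ j → j < g →
      ∃ L : ℝ,
        Filter.Tendsto (fun x : ℝ => (p (x + 2 * Real.pi * (j : ℝ) / (g : ℝ)))^2 / f x)
          (nhdsWithin x₀ {x : ℝ | f x ≠ 0}) (nhds L)

/-- TGM condition (ii): `∑_{y ∈ Ω_g(x)} p(y)² > 0` for all `x ∈ [0,2π)`. -/
def TGMCondTwo (p : ℝ → ℝ) (g : ℕ) : Prop :=
  ∀ x ∈ Set.Ico (0 : ℝ) (2 * Real.pi),
    0 < ∑ j ∈ Finset.range g, (p (x + 2 * Real.pi * (j : ℝ) / (g : ℝ)))^2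

/-- The projected symbol `f̂(x) = (1/g) ∑_{y ∈ Ω_g(x/g)} f(y) |p(y)|²`. -/
def projSymbol (g : ℕ) (f p : ℝ → ℝ) : ℝ → ℝ := fun x =>
  ((g : ℝ))⁻¹ *
    ∑ j ∈ Finset.range g,
      f ((x + 2 * Real.pi * (j : ℝ)) / (g : ℝ)) * (p ((x + 2 * Real.pi * (j : ℝ)) / (g : ℝ)))^2

lemma trig_continuous {f : ℝ → ℝ} (hf : IsTrigPolyR f) : Continuous f := by
  obtain ⟨c, a, ha⟩ := hf
  have : f = fun x : ℝ => (∑ j ∈ Finset.Icc (-(c : ℤ)) (c : ℤ),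
      a j * Complex.exp (Complex.I * (j : ℂ) * (x : ℂ))).re := by
    funext x; rw [← ha x, Complex.ofReal_re]
  rw [this]
  exact Complex.continuous_re.comp (continuous_finset_sum _ fun j _ =>
    continuous_const.mul (Complex.continuous_exp.comp (by continuity)))

lemma trig_periodic {f : ℝ → ℝ} (hf : IsTrigPolyR f) : Function.Periodic f (2 * Real.pi) := by
  obtain ⟨c, a, ha⟩ := hf
  intro x
  have : ((f (x + 2 * Real.pi) : ℝ) : ℂ) = ((f x : ℝ) : ℂ) := by
    rw [ha, ha]
    refine Finset.sum_congr rfl fun j _ => ?_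
    rw [mul_eq_mul_left_iff]
    left
    push_cast
    rw [mul_add, Complex.exp_add]
    have : Complex.exp (Complex.I * (j : ℂ) * (2 * Real.pi)) = 1 := by
      have := Complex.exp_int_mul_two_pi_mul_I j
      rw [← this]; ring_nf
    rw [this, mul_one]
  exact_mod_cast this

theorem projSymbol_zero_same_order (g : ℕ) (hg : 2 ≤ g)
    (f p : ℝ → ℝ) (hf : IsTrigPolyR f) (hf0 : ∀ x, 0 ≤ f x) (hp : IsTrigPolyR p)
    (hc1 : TGMCondOne f p g) (hc2 : TGMCondTwo p g)
    (x₀ : ℝ) (hx₀ : x₀ ∈ Set.Ico (0 : ℝ) (2 * Real.pi)) (hzero : f x₀ = 0)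
    (β : ℕ)
    (horder : ∃ L : ℝ, 0 < L ∧
      Filter.Tendsto (fun x : ℝ => f x / |x - x₀| ^ (2 * β)) (nhdsWithin x₀ {x₀}ᶜ) (nhds L)) :
    ∀ y₀ : ℝ, (∃ m : ℤ, y₀ = (g : ℝ) * x₀ + 2 * Real.pi * (m : ℝ)) →
      projSymbol g f p y₀ = 0 ∧
        ∃ L' : ℝ, 0 < L' ∧
          Filter.Tendsto (fun y : ℝ => projSymbol g f p y / |y - y₀| ^ (2 * β))
            (nhdsWithin y₀ {y₀}ᶜ) (nhds L') := by
  obtain ⟨L, hLpos, hLt⟩ := horder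
  rintro y₀ ⟨m, hy₀⟩
  have hgZ : (0 : ℤ) < (g : ℤ) := by exact_mod_cast Nat.lt_of_lt_of_le Nat.zero_lt_two hg
  have hgZ0 : (g : ℤ) ≠ 0 := hgZ.ne'
  have hgR : (0 : ℝ) < (g : ℝ) := by exact_mod_cast Nat.lt_of_lt_of_le Nat.zero_lt_two hg
  have hgR0 : (g : ℝ) ≠ 0 := hgR.ne'
  have cf := trig_continuous hf
  have cp := trig_continuous hp
  have perf := trig_periodic hf
  have perp := trig_periodic hp
  -- Step A : f ≠ 0 eventually on punctured neighbourhood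
  have hne : ∀ᶠ x in 𝓝[{x₀}ᶜ] x₀, f x ≠ 0 := by
    have h1 : ∀ᶠ x in 𝓝[{x₀}ᶜ] x₀, 0 < f x / |x - x₀| ^ (2 * β) :=
      hLt (Ioi_mem_nhds hLpos)
    filter_upwards [h1] with x hx
    intro h0
    rw [h0, zero_div] at hx
    exact lt_irrefl _ hx
  have hle : 𝓝[{x₀}ᶜ] x₀ ≤ 𝓝[{x : ℝ | f x ≠ 0}] x₀ := nhdsWithin_le_iff.mpr hne
  have hnb : (𝓝[{x : ℝ | f x ≠ 0}] x₀).NeBot := neBot_of_le hle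
  -- Step C : p vanishes at all mirror points of x₀
  have hCzero : ∀ k : ℕ, 1 ≤ k → k < g → p (x₀ + 2 * Real.pi * (k : ℝ) / (g : ℝ)) = 0 := by
    intro k hk1 hk2
    obtain ⟨Lk, hLk⟩ := hc1 x₀ hx₀ hzero k hk1 hk2
    have hf0t : Tendsto f (𝓝[{x : ℝ | f x ≠ 0}] x₀) (𝓝 0) := by
      have h : Tendsto f (𝓝[{x : ℝ | f x ≠ 0}] x₀) (𝓝 (f x₀)) :=
        Tendsto.mono_left (cf.tendsto x₀) nhdsWithin_le_nhds
      rwa [hzero] at h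
    have h1 : Tendsto (fun x : ℝ => (p (x + 2 * Real.pi * (k : ℝ) / (g : ℝ)))^2 / f x * f x)
        (𝓝[{x : ℝ | f x ≠ 0}] x₀) (𝓝 (Lk * 0)) := hLk.mul hf0t
    have h2 : Tendsto (fun x : ℝ => (p (x + 2 * Real.pi * (k : ℝ) / (g : ℝ)))^2)
        (𝓝[{x : ℝ | f x ≠ 0}] x₀) (𝓝 ((p (x₀ + 2 * Real.pi * (k : ℝ) / (g : ℝ)))^2)) := by
      have : Continuous fun x : ℝ => (p (x + 2 * Real.pi * (k : ℝ) / (g : ℝ)))^2 := by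
        exact (cp.comp (by continuity)).pow 2
      exact (this.tendsto x₀).mono_left nhdsWithin_le_nhds
    have h3 : Tendsto (fun x : ℝ => (p (x + 2 * Real.pi * (k : ℝ) / (g : ℝ)))^2)
        (𝓝[{x : ℝ | f x ≠ 0}] x₀) (𝓝 (Lk * 0)) := by
      refine h1.congr' ?_
      filter_upwards [self_mem_nhdsWithin] with x (hx : f x ≠ 0)
      field_simp
    have h4 : (p (x₀ + 2 * Real.pi * (k : ℝ) / (g : ℝ)))^2 = 0 := by
      rw [tendsto_nhds_unique h2 h3, mul_zero]
    exact pow_eq_zero_iff (by norm_num : (2:ℕ) ≠ 0) |>.mp h4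
  -- Step D : p x₀ ≠ 0
  have hpx : 0 < (p x₀)^2 := by
    have hsum := hc2 x₀ hx₀
    have hs : ∑ j ∈ Finset.range g, (p (x₀ + 2 * Real.pi * (j : ℝ) / (g : ℝ)))^2
        = (p x₀)^2 := by
      rw [Finset.sum_eq_single_of_mem 0 (Finset.mem_range.mpr (by omega))]
      · norm_num
      · intro b hb hb0
        rw [hCzero b (Nat.one_le_iff_ne_zero.mpr hb0) (Finset.mem_range.mp hb)]
        ring
    rwa [hs] at hsum
  -- periodic reduction of the arguments
  have hered : ∀ (F : ℝ → ℝ), Function.Periodic F (2 * Real.pi) → ∀ (j : ℕ) (y : ℝ),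
      F ((y + 2 * Real.pi * (j : ℝ)) / (g : ℝ)) =
      F (x₀ + (y - y₀) / (g : ℝ)
          + 2 * Real.pi * (((m + (j : ℤ)) % (g : ℤ)).toNat : ℝ) / (g : ℝ)) := by
    intro F hF j y
    set q : ℤ := (m + (j : ℤ)) / (g : ℤ) with hq
    set k : ℕ := ((m + (j : ℤ)) % (g : ℤ)).toNat with hkdef
    have hkZ : (k : ℤ) = (m + (j : ℤ)) % (g : ℤ) :=
      Int.toNat_of_nonneg (Int.emod_nonneg _ hgZ0)
    have hint : (g : ℤ) * q + (k : ℤ) = m + (j : ℤ) := by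
      rw [hkZ, hq]; exact Int.mul_ediv_add_emod _ _
    have hreal : (g : ℝ) * (q : ℝ) + (k : ℝ) = (m : ℝ) + (j : ℝ) := by
      exact_mod_cast hint
    have harg : (y + 2 * Real.pi * (j : ℝ)) / (g : ℝ) =
        (x₀ + (y - y₀) / (g : ℝ) + 2 * Real.pi * (k : ℝ) / (g : ℝ)) + (q : ℝ) * (2 * Real.pi) := by
      rw [hy₀]
      field_simp
      ring_nf
      nlinarith [hreal, Real.pi_pos]
    rw [harg, (hF.int_mul q) _]
  -- the mirror-point values written via hered
  -- Part 1 : projSymbol vanishes at y₀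
  have part1 : projSymbol g f p y₀ = 0 := by
    unfold projSymbol
    rw [Finset.sum_eq_zero, mul_zero]
    intro j hj
    rw [hered f perf j y₀, hered p perp j y₀]
    rcases Nat.eq_zero_or_pos (((m + (j : ℤ)) % (g : ℤ)).toNat) with h0 | h1
    · rw [h0]
      simp [hzero]
    · have hlt : ((m + (j : ℤ)) % (g : ℤ)).toNat < g := by
        have := Int.emod_lt_of_pos (m + (j : ℤ)) hgZ
        omega
      rw [show x₀ + (y₀ - y₀) / (g : ℝ) = x₀ by ring_nf]
      rw [hCzero _ h1 hlt]
      ring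
  refine ⟨part1, ?_⟩
  -- the rescaled variable map
  set X : ℝ → ℝ := fun y => x₀ + (y - y₀) / (g : ℝ) with hX
  have hXt : Tendsto X (𝓝[{y₀}ᶜ] y₀) (𝓝[{x₀}ᶜ] x₀) := by
    rw [tendsto_nhdsWithin_iff]
    constructor
    · have h : Tendsto X (𝓝 y₀) (𝓝 (x₀ + (y₀ - y₀) / (g : ℝ))) :=
        (continuous_const.add ((continuous_id.sub continuous_const).div_const _)).tendsto y₀
      simpa using h.mono_left nhdsWithin_le_nhds
    · filter_upwards [self_mem_nhdsWithin] with y hy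
      simp only [Set.mem_compl_iff, Set.mem_singleton_iff] at hy ⊢
      intro h
      apply hy
      have h2 : (y - y₀) / (g : ℝ) = 0 := by
        have h3 : x₀ + (y - y₀) / (g : ℝ) = x₀ := h
        linarith
      have h4 := (div_eq_zero_iff.mp h2).resolve_right hgR0
      linarith
  have habs : ∀ y : ℝ, |y - y₀| ^ (2 * β) = (g : ℝ) ^ (2 * β) * |X y - x₀| ^ (2 * β) := by
    intro y
    have h1 : |X y - x₀| = |y - y₀| / (g : ℝ) := by
      rw [hX]
      simp only
      rw [show x₀ + (y - y₀) / (g : ℝ) - x₀ = (y - y₀) / (g : ℝ) by ring]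
      rw [abs_div, abs_of_pos hgR]
    have h2 : ((g : ℝ)) ^ (2 * β) ≠ 0 := by positivity
    rw [h1, div_pow, ← mul_div_assoc, mul_div_cancel_left₀ _ h2]
  -- the key per-term limit
  have key : ∀ j : ℕ, ∃ T : ℝ, 0 ≤ T ∧ ((m + (j : ℤ)) % (g : ℤ) = 0 → 0 < T) ∧
      Tendsto (fun y : ℝ =>
          f ((y + 2 * Real.pi * (j : ℝ)) / (g : ℝ)) *
            (p ((y + 2 * Real.pi * (j : ℝ)) / (g : ℝ)))^2 / |y - y₀| ^ (2 * β))
        (𝓝[{y₀}ᶜ] y₀) (𝓝 T) := by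
    intro j
    set k : ℕ := ((m + (j : ℤ)) % (g : ℤ)).toNat with hkdef
    have hkZ : (k : ℤ) = (m + (j : ℤ)) % (g : ℤ) :=
      Int.toNat_of_nonneg (Int.emod_nonneg _ hgZ0)
    have hklt : k < g := by
      have := Int.emod_lt_of_pos (m + (j : ℤ)) hgZ
      omega
    have herf : ∀ y, f ((y + 2 * Real.pi * (j : ℝ)) / (g : ℝ))
        = f (X y + 2 * Real.pi * (k : ℝ) / (g : ℝ)) := fun y => hered f perf j y
    have herp : ∀ y, p ((y + 2 * Real.pi * (j : ℝ)) / (g : ℝ))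
        = p (X y + 2 * Real.pi * (k : ℝ) / (g : ℝ)) := fun y => hered p perp j y
    rcases Nat.eq_zero_or_pos k with hk0 | hk1
    · -- principal corner
      refine ⟨((g : ℝ) ^ (2 * β))⁻¹ * L * (p x₀)^2, by positivity, fun _ => by positivity, ?_⟩
      have hXt' : Tendsto X (𝓝[{y₀}ᶜ] y₀) (𝓝 x₀) := hXt.mono_right nhdsWithin_le_nhds
      have hmain : Tendsto (fun y : ℝ =>
          ((g : ℝ) ^ (2 * β))⁻¹ * (f (X y) / |X y - x₀| ^ (2 * β)) * (p (X y))^2)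
          (𝓝[{y₀}ᶜ] y₀) (𝓝 (((g : ℝ) ^ (2 * β))⁻¹ * L * (p x₀)^2)) := by
        exact ((tendsto_const_nhds.mul (hLt.comp hXt)).mul
          (((cp.tendsto x₀).comp hXt').pow 2))
      refine hmain.congr fun y => ?_
      rw [herf y, herp y, hk0]
      simp only [Nat.cast_zero, mul_zero, zero_div, add_zero]
      rw [habs y]
      ring
    · -- mirror corner
      obtain ⟨Lk, hLk⟩ := hc1 x₀ hx₀ hzero k hk1 hklt
      have hLknn : 0 ≤ Lk := by
        refine ge_of_tendsto hLk ?_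
        filter_upwards [self_mem_nhdsWithin] with x (hx : f x ≠ 0)
        exact div_nonneg (sq_nonneg _) (hf0 x)
      refine ⟨((g : ℝ) ^ (2 * β))⁻¹ *
          (f (x₀ + 2 * Real.pi * (k : ℝ) / (g : ℝ)) * (Lk * L)), ?_, ?_, ?_⟩
      · have := hf0 (x₀ + 2 * Real.pi * (k : ℝ) / (g : ℝ))
        positivity
      · intro h0
        exfalso
        rw [← hkZ] at h0
        omega
      · have hLk' : Tendsto (fun x : ℝ => (p (x + 2 * Real.pi * (k : ℝ) / (g : ℝ)))^2 / f x)
            (𝓝[{x₀}ᶜ] x₀) (𝓝 Lk) := hLk.mono_left hle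
        have hXt' : Tendsto X (𝓝[{y₀}ᶜ] y₀) (𝓝 x₀) := hXt.mono_right nhdsWithin_le_nhds
        have hcont : Tendsto (fun y : ℝ => f (X y + 2 * Real.pi * (k : ℝ) / (g : ℝ)))
            (𝓝[{y₀}ᶜ] y₀) (𝓝 (f (x₀ + 2 * Real.pi * (k : ℝ) / (g : ℝ)))) := by
          have hc : Continuous fun x : ℝ => f (x + 2 * Real.pi * (k : ℝ) / (g : ℝ)) :=
            cf.comp (by continuity)
          exact (hc.tendsto x₀).comp hXt'
        have hmain : Tendsto (fun y : ℝ =>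
            ((g : ℝ) ^ (2 * β))⁻¹ * (f (X y + 2 * Real.pi * (k : ℝ) / (g : ℝ)) *
              (((p (X y + 2 * Real.pi * (k : ℝ) / (g : ℝ)))^2 / f (X y)) *
                (f (X y) / |X y - x₀| ^ (2 * β)))))
            (𝓝[{y₀}ᶜ] y₀)
            (𝓝 (((g : ℝ) ^ (2 * β))⁻¹ *
              (f (x₀ + 2 * Real.pi * (k : ℝ) / (g : ℝ)) * (Lk * L)))) := by
          exact tendsto_const_nhds.mul (hcont.mul ((hLk'.comp hXt).mul (hLt.comp hXt)))
        refine hmain.congr' ?_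
        filter_upwards [hXt.eventually hne] with y hy
        rw [herf y, herp y, habs y,
          div_mul_div_cancel₀ (hy : f (X y) ≠ 0), ← div_div]
        ring
  choose T hT0 hTpos hTt using key
  refine ⟨(g : ℝ)⁻¹ * ∑ j ∈ Finset.range g, T j, ?_, ?_⟩
  · apply mul_pos (by positivity)
    refine Finset.sum_pos' (fun j _ => hT0 j) ?_
    refine ⟨((-m) % (g : ℤ)).toNat, Finset.mem_range.mpr ?_, ?_⟩
    · have := Int.emod_lt_of_pos (-m) hgZ
      have := Int.emod_nonneg (-m) hgZ0
      omega
    · apply hTpos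
      have h1 : ((((-m) % (g : ℤ)).toNat : ℤ)) = (-m) % (g : ℤ) :=
        Int.toNat_of_nonneg (Int.emod_nonneg _ hgZ0)
      rw [h1]
      have : m + (-m) % (g : ℤ) = (g : ℤ) * (-((-m) / (g : ℤ))) := by
        rw [Int.emod_def]; ring
      rw [this]
      exact Int.mul_emod_right _ _
  · have hsum : Tendsto (fun y : ℝ => ∑ j ∈ Finset.range g,
        (f ((y + 2 * Real.pi * (j : ℝ)) / (g : ℝ)) *
          (p ((y + 2 * Real.pi * (j : ℝ)) / (g : ℝ)))^2 / |y - y₀| ^ (2 * β)))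
        (𝓝[{y₀}ᶜ] y₀) (𝓝 (∑ j ∈ Finset.range g, T j)) :=
      tendsto_finset_sum _ fun j _ => hTt j
    have hmul := hsum.const_mul ((g : ℝ)⁻¹)
    refine hmul.congr fun y => ?_
    unfold projSymbol
    rw [mul_div_assoc, Finset.sum_div]
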